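/- Let 𝔇 be an additive category, F : Rings → 𝔇 a functor, and R a sum ring. Assume that the map γ = F(π₀) + F(π₁) : F(R×R) → F(R) ⊕ F(R) induced by the two projections is an isomorphism, and that F is M₂-stable on both R and M₂R. Then the composite F(⊞) ∘ γ⁻¹ : F(R) ⊕ F(R) → F(R) restricts to the identity on each copy of F(R), i.e. it is the codiagonal map. If moreover R is an infinite sum ring, then F(R) = 0. -/

import Mathlib

/-!
Statement 2.  Let `𝔇` be an additive category, `F : Rings → 𝔇` a functor, and
`R` a sum ring (a unital ring with elements `α₀, α₁, β₀, β₁` satisfying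
`α₀β₀ = α₁β₁ = 1` and `β₀α₀ + β₁α₁ = 1`; then `⊞(a,b) = β₀aα₀ + β₁bα₁` is a
unital ring homomorphism `R×R → R`).  Assume that
`γ = ⟨F(π₀), F(π₁)⟩ : F(R×R) → F(R) ⊕ F(R)` is an isomorphism and that `F` is
`M₂`-stable on both `R` and `M₂R`.  Then `F(⊞) ∘ γ⁻¹` restricts to the
identity on each copy of `F(R)` (it is the codiagonal map).  If moreover `R`
is an infinite sum ring (there is a unital ring homomorphism `a ↦ a^∞` with
`a ⊞ a^∞ = a^∞`), then `F(R) = 0`.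
-/

set_option autoImplicit false
noncomputable section

open CategoryTheory CategoryTheory.Limits

/-- `M₂A`: the ring of 2×2 matrices over `A`. -/
abbrev M2 (A : Type) [NonUnitalRing A] : Type := Matrix (Fin 2) (Fin 2) A

/-- The corner inclusion `ι₀ : A → M₂A`, `a ↦ a·e₁₁`. -/
def iota0 (A : Type) [NonUnitalRing A] : A →ₙ+* M2 A where
  toFun a := Matrix.single 0 0 a
  map_mul' := by
    intro a b
    simpa using (Matrix.single_mul_single_same (i := (0 : Fin 2)) (j := 0) (k := (0 : Fin 2)) (c := a) (d := b)).symm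
  map_zero' := by simp
  map_add' := by intro a b; ext i j; simp [Matrix.single]; aesop

/-- A functor from the category of (not necessarily unital) rings to a
category `𝔇`. -/
structure RingFunctor (D : Type*) [Category D] where
  obj : (A : Type) → [NonUnitalRing A] → D
  map : {A B : Type} → [NonUnitalRing A] → [NonUnitalRing B] →
    (A →ₙ+* B) → (obj A ⟶ obj B)
  map_id : ∀ (A : Type) [NonUnitalRing A],
    map (NonUnitalRingHom.id A) = 𝟙 (obj A)
  map_comp : ∀ {A B C : Type} [NonUnitalRing A] [NonUnitalRing B]
    [NonUnitalRing C] (f : A →ₙ+* B) (g : B →ₙ+* C),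
    map (g.comp f) = map f ≫ map g

/-- `F` is `M₂`-stable on `A` if it sends the corner inclusion
`ι₀ : A → M₂A` to an isomorphism. -/
def RingFunctor.M2Stable {D : Type*} [Category D] (F : RingFunctor D)
    (A : Type) [NonUnitalRing A] : Prop :=
  IsIso (F.map (iota0 A))

/-!
Conjugation by a unit of `B` acts trivially on `F B` once `F` is `M₂`-stable on `B` and `M₂B`:
by the Whitehead lemma `diag(u, u⁻¹)` is a product of elementary matrices, and each elementary
matrix, placed in the corner of `M₂M₂B`, is a commutator of elementary matrices one of which
commutes with the corner `e₁₁`. If `w v = 1`, then `x ↦ v x w` is the restriction to the corner of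
conjugation by the unit `[[v, 1 - v w], [0, w]]` of `M₂B`, so it acts trivially as well.
A sum ring satisfies `R ≅ M₂R`, so stability passes to `M₂M₂R`, and the maps `x ↦ βᵢ x αᵢ`,
which are `⊞` restricted to the `i`-th factor, act trivially: this is the codiagonal statement.
For an infinite sum ring the Eilenberg swindle `F(a ↦ a^∞) = 𝟙 + F(a ↦ a^∞)` forces `𝟙 = 0`.
-/

open scoped commutatorElement

section ConjBy
variable {C : Type} [Ring C]

def conjBy (v w : C) (h : w * v = 1) : C →ₙ+* C where
  toFun x := v * x * w
  map_mul' x y := by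
    calc v * (x * y) * w = v * x * (w * v) * y * w := by rw [h]; noncomm_ring
      _ = v * x * w * (v * y * w) := by noncomm_ring
  map_zero' := by simp
  map_add' x y := by noncomm_ring

@[simp] lemma conjBy_apply (v w : C) (h : w * v = 1) (x : C) : conjBy v w h x = v * x * w := rfl

lemma conjBy_comp_conjBy (v w v' w' : C) (h : w * v = 1) (h' : w' * v' = 1) :
    (conjBy v w h).comp (conjBy v' w' h') =
      conjBy (v * v') (w' * w) (by rw [mul_assoc, ← mul_assoc w, h, one_mul, h']) := by
  ext x; simp only [NonUnitalRingHom.comp_apply, conjBy_apply]; noncomm_ring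

abbrev conjUnit (u : Cˣ) : C →ₙ+* C := conjBy u ↑u⁻¹ u.inv_mul

def unipotent (e : C) (he : e * e = 0) : Cˣ where
  val := 1 + e
  inv := 1 - e
  val_inv := by simp [mul_sub, add_mul, he]
  inv_val := by simp [sub_mul, mul_add, he]

@[simp] lemma unipotent_val (e : C) (he : e * e = 0) : (unipotent e he : C) = 1 + e := rfl
@[simp] lemma unipotent_inv_val (e : C) (he : e * e = 0) : (↑(unipotent e he)⁻¹ : C) = 1 - e := rfl

lemma commutator_unipotent_unipotent {e f : C} (he : e * e = 0) (hf : f * f = 0)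
    (hfe : f * e = 0) :
    ⁅unipotent e he, unipotent f hf⁆ =
      unipotent (e * f) (by rw [mul_assoc, ← mul_assoc f, hfe, zero_mul, mul_zero]) := by
  have hefe : e * f * e = 0 := by rw [mul_assoc, hfe, mul_zero]
  have heff : e * f * f = 0 := by rw [mul_assoc, hf, mul_zero]
  ext
  simp only [commutatorElement_def, Units.val_mul, unipotent_val, unipotent_inv_val]
  simp only [mul_add, add_mul, mul_sub, sub_mul, mul_one, one_mul, he, hf, hfe,
    hefe, heff, zero_mul]
  abel

lemma map_conjUnit_unipotent {S : Type} [Ring S] (φ : C →ₙ+* S) (e : C)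
    (he : e * e = 0) (x : C) :
    φ (conjUnit (unipotent e he) x) =
      conjUnit (unipotent (φ e) (by rw [← map_mul, he, map_zero])) (φ x) := by
  simp [add_mul, mul_sub, map_add, map_sub, map_mul]

end ConjBy

@[simp] lemma iota0_apply (A : Type) [NonUnitalRing A] (a : A) :
    iota0 A a = Matrix.single 0 0 a := rfl

lemma single_mul_single_self_of_ne {B n : Type} [Ring B] [Fintype n] [DecidableEq n] {i j : n}
    (hij : i ≠ j) (x y : B) : Matrix.single i j x * Matrix.single i j y = 0 :=
  Matrix.single_mul_single_of_ne _ _ _ _ hij.symm _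

section Whitehead
variable {B : Type} [Ring B]

def diagUnit (u v : Bˣ) : (M2 B)ˣ where
  val := Matrix.diagonal ![(u : B), v]
  inv := Matrix.diagonal ![(↑u⁻¹ : B), ↑v⁻¹]
  val_inv := by
    rw [Matrix.diagonal_mul_diagonal, ← Matrix.diagonal_one]
    congr 1; ext i; fin_cases i <;> simp
  inv_val := by
    rw [Matrix.diagonal_mul_diagonal, ← Matrix.diagonal_one]
    congr 1; ext i; fin_cases i <;> simp

lemma diagUnit_mul_diagUnit (u v u' v' : Bˣ) :
    diagUnit u v * diagUnit u' v' = diagUnit (u * u') (v * v') := by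
  ext : 1
  simp only [Units.val_mul, diagUnit, Matrix.diagonal_mul_diagonal]
  congr 1; ext i; fin_cases i <;> simp

def weylUnit (u : Bˣ) : (M2 B)ˣ :=
  unipotent (Matrix.single 0 1 (u : B)) (single_mul_single_self_of_ne zero_ne_one _ _) *
    unipotent (Matrix.single 1 0 (-↑u⁻¹ : B)) (single_mul_single_self_of_ne one_ne_zero _ _) *
    unipotent (Matrix.single 0 1 (u : B)) (single_mul_single_self_of_ne zero_ne_one _ _)

lemma weylUnit_val (u : Bˣ) : (weylUnit u : M2 B) = !![0, (u : B); -↑u⁻¹, 0] := by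
  ext i j
  fin_cases i <;> fin_cases j <;>
    simp [weylUnit, Matrix.mul_apply, Fin.sum_univ_two, Matrix.one_apply, Matrix.single_apply]

lemma weylUnit_mul_weylUnit_neg_one (u : Bˣ) : weylUnit u * weylUnit (-1) = diagUnit u u⁻¹ := by
  ext i j
  fin_cases i <;> fin_cases j <;>
    simp [weylUnit_val, diagUnit, Matrix.mul_apply, Fin.sum_univ_two]

lemma iota0_conjUnit (u : Bˣ) (x : B) :
    iota0 B (conjUnit u x) = conjUnit (diagUnit u 1) (iota0 B x) := by
  ext i j
  fin_cases i <;> fin_cases j <;>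
    simp [diagUnit, Matrix.single_apply, Matrix.mul_apply, Fin.sum_univ_two]

lemma commute_diagUnit_one_iota0 (u : Bˣ) (x : B) :
    Commute (diagUnit 1 u : M2 B) (iota0 B x) := by
  ext i j
  fin_cases i <;> fin_cases j <;>
    simp [diagUnit, Matrix.single_apply, Matrix.mul_apply]

end Whitehead

section SumRing
variable {R : Type} [Ring R]

lemma mul_eq_zero_of_sumRing {a0 a1 b0 b1 : R} (h00 : a0 * b0 = 1) (h11 : a1 * b1 = 1)
    (hsum : b0 * a0 + b1 * a1 = 1) : a0 * b1 = 0 := by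
  have h : a0 * b1 = a0 * b1 + a0 * b1 :=
    calc a0 * b1 = a0 * (b0 * a0 + b1 * a1) * b1 := by rw [hsum, mul_one]
      _ = (a0 * b0) * (a0 * b1) + (a0 * b1) * (a1 * b1) := by noncomm_ring
      _ = a0 * b1 + a0 * b1 := by rw [h00, h11, one_mul, mul_one]
  simpa using h

variable {n : Type} [Fintype n] [DecidableEq n]

def ringEquivMatrixOfSumRing (a b : n → R) (hab : ∀ i j, a i * b j = if i = j then 1 else 0)
    (hba : ∑ i, b i * a i = 1) : R ≃+* Matrix n n R where
  toFun x := Matrix.of fun i j => a i * x * b j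
  invFun m := ∑ i, ∑ j, b i * m i j * a j
  left_inv x :=
    calc ∑ i, ∑ j, b i * (a i * x * b j) * a j = (∑ i, b i * a i) * x * ∑ j, b j * a j := by
          simp only [Finset.sum_mul, Finset.mul_sum, mul_assoc]
          exact Finset.sum_comm
      _ = x := by rw [hba, one_mul, mul_one]
  right_inv m := by
    ext k l
    have hsplit (i j : n) :
        a k * (b i * m i j * a j) * b l = (a k * b i) * m i j * (a j * b l) := by
      noncomm_ring
    simp [Finset.mul_sum, Finset.sum_mul, hsplit, hab]
  map_mul' x y := by
    ext i j
    calc a i * (x * y) * b j = a i * x * (∑ k, b k * a k) * y * b j := by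
          rw [hba, mul_one]; noncomm_ring
      _ = ∑ k, a i * x * b k * (a k * y * b j) := by
          simp only [Finset.mul_sum, Finset.sum_mul, mul_assoc]
  map_add' x y := by
    ext i j
    simp [mul_add, add_mul]

def sumRingEquivM2 {a0 a1 b0 b1 : R} (h00 : a0 * b0 = 1) (h11 : a1 * b1 = 1)
    (hsum : b0 * a0 + b1 * a1 = 1) : R ≃+* M2 R :=
  ringEquivMatrixOfSumRing ![a0, a1] ![b0, b1]
    (by
      have h01 := mul_eq_zero_of_sumRing h00 h11 hsum
      have h10 := mul_eq_zero_of_sumRing h11 h00 (by rwa [add_comm])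
      intro i j
      fin_cases i <;> fin_cases j <;> simp [h00, h11, h01, h10])
    (by simpa [Fin.sum_univ_two] using hsum)

end SumRing

namespace RingFunctor
variable {D : Type*} [Category D] (F : RingFunctor D)

lemma isIso_map_ringEquiv {A B : Type} [NonUnitalRing A] [NonUnitalRing B] (e : A ≃+* B) :
    IsIso (F.map e.toNonUnitalRingHom) :=
  ⟨F.map e.symm.toNonUnitalRingHom,
    by rw [← F.map_comp, ← F.map_id]; congr 1; ext x; simp,
    by rw [← F.map_comp, ← F.map_id]; congr 1; ext x; simp⟩

variable {F} in
lemma M2Stable.of_ringEquiv {A B : Type} [Ring A] [Ring B] (e : A ≃+* B)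
    (hA : F.M2Stable A) : F.M2Stable B := by
  let eM : M2 A ≃+* M2 B := e.mapMatrix
  have hnat : (iota0 B).comp e.toNonUnitalRingHom =
      eM.toNonUnitalRingHom.comp (iota0 A) := by
    ext x : 1
    exact (Matrix.map_single 0 0 x e).symm
  have := F.isIso_map_ringEquiv e
  have := F.isIso_map_ringEquiv eM
  have : F.map (iota0 B) = inv (F.map e.toNonUnitalRingHom) ≫ F.map (iota0 A) ≫
      F.map eM.toNonUnitalRingHom := by
    rw [← F.map_comp, ← hnat, F.map_comp, IsIso.inv_hom_id_assoc]
  unfold M2Stable at hA ⊢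
  rw [this]
  infer_instance

def unitsConj (C : Type) [Ring C] : Cˣ →* End (F.obj C) where
  toFun u := F.map (conjUnit u)
  map_one' := by
    rw [End.one_def, ← F.map_id]
    congr 1
    ext x
    simp
  map_mul' u u' := by
    rw [End.mul_def, ← F.map_comp, conjBy_comp_conjBy]
    congr 1

variable {C : Type} [Ring C]

lemma mem_ker_unitsConj_iff (u : Cˣ) :
    u ∈ (F.unitsConj C).ker ↔ F.map (conjUnit u) = 𝟙 _ := MonoidHom.mem_ker

lemma mem_ker_unitsConj_of_commute {A : Type} [NonUnitalRing A] (h : A →ₙ+* C)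
    [Epi (F.map h)] (g : Cˣ) (hg : ∀ x, Commute (g : C) (h x)) :
    g ∈ (F.unitsConj C).ker := by
  rw [mem_ker_unitsConj_iff, ← cancel_epi (F.map h), ← F.map_comp, Category.comp_id]
  congr 1
  ext x
  simp [(hg x).eq, mul_assoc]

lemma map_conjBy_eq_id_of_intertwine {B : Type} [Ring B] (φ : C →ₙ+* B) [Mono (F.map φ)]
    {v w : C} (h : w * v = 1) (g : Bˣ) (hg : g ∈ (F.unitsConj B).ker)
    (hφ : ∀ x, φ (conjBy v w h x) = conjUnit g (φ x)) :
    F.map (conjBy v w h) = 𝟙 _ := by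
  rw [mem_ker_unitsConj_iff] at hg
  rw [← cancel_mono (F.map φ), ← F.map_comp, Category.id_comp,
    show φ.comp (conjBy v w h) = (conjUnit g).comp φ from NonUnitalRingHom.ext hφ,
    F.map_comp, hg, Category.comp_id]

lemma mem_ker_unitsConj_of_unipotent_iota0_mem [Mono (F.map (iota0 C))]
    (e : C) (he : e * e = 0)
    (h : unipotent (iota0 C e) (by rw [← map_mul, he, map_zero]) ∈ (F.unitsConj (M2 C)).ker) :
    unipotent e he ∈ (F.unitsConj C).ker :=
  (F.mem_ker_unitsConj_iff _).2 <|
    F.map_conjBy_eq_id_of_intertwine (iota0 C) _ _ h (map_conjUnit_unipotent _ e he)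

variable {B : Type} [Ring B]

lemma epi_map_iota0_comp_iota0 (hB : F.M2Stable B) (hB2 : F.M2Stable (M2 B)) :
    Epi (F.map ((iota0 (M2 B)).comp (iota0 B))) := by
  unfold M2Stable at hB hB2
  rw [F.map_comp]
  infer_instance

lemma mem_ker_unitsConj_unipotent_single_zero_one
    (hB : F.M2Stable B) (hB2 : F.M2Stable (M2 B)) (x : B) :
    unipotent (Matrix.single 0 1 x : M2 B) (single_mul_single_self_of_ne zero_ne_one x x) ∈
      (F.unitsConj (M2 B)).ker := by
  have := F.epi_map_iota0_comp_iota0 hB hB2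
  have : Mono (F.map (iota0 (M2 B))) := by unfold M2Stable at hB2; infer_instance
  apply mem_ker_unitsConj_of_unipotent_iota0_mem
  have hf := F.mem_ker_unitsConj_of_commute ((iota0 (M2 B)).comp (iota0 B))
    (unipotent (Matrix.single 1 0 (Matrix.single 0 1 (1 : B)) : M2 (M2 B))
      (single_mul_single_self_of_ne one_ne_zero _ _))
    (fun y => by simp [Commute, SemiconjBy, add_mul, mul_add, Matrix.single_mul_single_of_ne])
  rw [show unipotent _ _ = ⁅unipotent (Matrix.single 0 1 (Matrix.single 0 0 x) : M2 (M2 B))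
      (single_mul_single_self_of_ne zero_ne_one _ _),
      unipotent (Matrix.single 1 0 (Matrix.single 0 1 (1 : B)) : M2 (M2 B))
      (single_mul_single_self_of_ne one_ne_zero _ _)⁆ by
    rw [commutator_unipotent_unipotent _ _ (by simp [Matrix.single_mul_single_same])]
    congr 1
    simp [Matrix.single_mul_single_same]]
  exact Subgroup.commutator_le_right _ _
    (Subgroup.commutator_mem_commutator (Subgroup.mem_top _) hf)

lemma mem_ker_unitsConj_unipotent_single_one_zero
    (hB : F.M2Stable B) (hB2 : F.M2Stable (M2 B)) (x : B) :
    unipotent (Matrix.single 1 0 x : M2 B) (single_mul_single_self_of_ne one_ne_zero x x) ∈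
      (F.unitsConj (M2 B)).ker := by
  have := F.epi_map_iota0_comp_iota0 hB hB2
  have : Mono (F.map (iota0 (M2 B))) := by unfold M2Stable at hB2; infer_instance
  apply mem_ker_unitsConj_of_unipotent_iota0_mem
  have he := F.mem_ker_unitsConj_of_commute ((iota0 (M2 B)).comp (iota0 B))
    (unipotent (Matrix.single 0 1 (Matrix.single 1 0 (1 : B)) : M2 (M2 B))
      (single_mul_single_self_of_ne zero_ne_one _ _))
    (fun y => by simp [Commute, SemiconjBy, add_mul, mul_add, Matrix.single_mul_single_of_ne])
  rw [show unipotent _ _ =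
      ⁅unipotent (Matrix.single 0 1 (Matrix.single 1 0 (1 : B)) : M2 (M2 B))
      (single_mul_single_self_of_ne zero_ne_one _ _),
      unipotent (Matrix.single 1 0 (Matrix.single 0 0 x) : M2 (M2 B))
      (single_mul_single_self_of_ne one_ne_zero _ _)⁆ by
    rw [commutator_unipotent_unipotent _ _ (by simp [Matrix.single_mul_single_same])]
    congr 1
    simp [Matrix.single_mul_single_same]]
  exact Subgroup.commutator_le_left _ _
    (Subgroup.commutator_mem_commutator he (Subgroup.mem_top _))

theorem mem_ker_unitsConj (hB : F.M2Stable B) (hB2 : F.M2Stable (M2 B)) (u : Bˣ) :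
    u ∈ (F.unitsConj B).ker := by
  unfold M2Stable at hB
  have hW (t : Bˣ) : weylUnit t ∈ (F.unitsConj (M2 B)).ker :=
    mul_mem (mul_mem (F.mem_ker_unitsConj_unipotent_single_zero_one hB hB2 _)
      (F.mem_ker_unitsConj_unipotent_single_one_zero hB hB2 _))
      (F.mem_ker_unitsConj_unipotent_single_zero_one hB hB2 _)
  have hD : diagUnit 1 u ∈ (F.unitsConj (M2 B)).ker :=
    F.mem_ker_unitsConj_of_commute (iota0 B) _ (commute_diagUnit_one_iota0 u)
  have hdiag : diagUnit u 1 ∈ (F.unitsConj (M2 B)).ker := by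
    rw [show diagUnit u 1 = weylUnit u * weylUnit (-1) * diagUnit 1 u by
      rw [weylUnit_mul_weylUnit_neg_one, diagUnit_mul_diagUnit, mul_one, inv_mul_cancel]]
    exact mul_mem (mul_mem (hW u) (hW (-1))) hD
  exact (F.mem_ker_unitsConj_iff u).2 <|
    F.map_conjBy_eq_id_of_intertwine (iota0 B) _ _ hdiag (iota0_conjUnit u)

theorem map_conjBy_eq_id (hB : F.M2Stable B) (hB2 : F.M2Stable (M2 B))
    (hB4 : F.M2Stable (M2 (M2 B))) {v w : B} (h : w * v = 1) :
    F.map (conjBy v w h) = 𝟙 _ := by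
  unfold M2Stable at hB
  have hv : (1 - v * w) * v = 0 := by rw [sub_mul, mul_assoc, h, mul_one, one_mul, sub_self]
  have hw : w * (1 - v * w) = 0 := by rw [mul_sub, ← mul_assoc, h, one_mul, mul_one, sub_self]
  have hp : (1 - v * w) * (1 - v * w) = 1 - v * w := by
    rw [mul_sub, mul_one, ← mul_assoc, hv, zero_mul, sub_zero]
  let U : (M2 B)ˣ :=
    { val := !![v, 1 - v * w; 0, w]
      inv := !![w, 0; 1 - v * w, v]
      val_inv := by
        ext i j
        fin_cases i <;> fin_cases j <;> simp [Matrix.mul_apply, h, hv, hw, hp]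
      inv_val := by
        ext i j
        fin_cases i <;> fin_cases j <;> simp [Matrix.mul_apply, h, hv, hw, hp] }
  refine F.map_conjBy_eq_id_of_intertwine (iota0 B) h U (F.mem_ker_unitsConj hB2 hB4 U)
    fun x => ?_
  ext i j
  fin_cases i <;> fin_cases j <;>
    simp [U, Matrix.vecMul, dotProduct, Fin.sum_univ_two, mul_assoc]

end RingFunctor

namespace RingFunctor
variable {D : Type*} [Category D] [Preadditive D] [HasBinaryBiproducts D] (F : RingFunctor D)
variable {A B : Type} [NonUnitalRing A] [NonUnitalRing B]

abbrev prodComparison (A B : Type) [NonUnitalRing A] [NonUnitalRing B] :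
    F.obj (A × B) ⟶ F.obj A ⊞ F.obj B :=
  biprod.lift (F.map (NonUnitalRingHom.fst A B)) (F.map (NonUnitalRingHom.snd A B))

lemma map_prod_comp_prodComparison {C : Type} [NonUnitalRing C] (f : C →ₙ+* A) (g : C →ₙ+* B) :
    F.map (f.prod g) ≫ F.prodComparison A B = biprod.lift (F.map f) (F.map g) := by
  ext <;> simp [← F.map_comp]

lemma map_prodMap_comp_prodComparison {A' B' : Type} [NonUnitalRing A'] [NonUnitalRing B']
    (f : A →ₙ+* A') (g : B →ₙ+* B') :
    F.map (f.prodMap g) ≫ F.prodComparison A' B' =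
      F.prodComparison A B ≫ biprod.map (F.map f) (F.map g) := by
  ext <;> simp [← F.map_comp, NonUnitalRingHom.prodMap_def]

variable [IsIso (F.prodComparison A B)]

lemma inl_comp_inv_prodComparison_comp_map (σ : A × B →ₙ+* A) (q : A →ₙ+* A)
    (hq : F.map q = 𝟙 _)
    (hσ : σ.comp ((NonUnitalRingHom.id A).prodMap 0) = q.comp (NonUnitalRingHom.fst A B)) :
    biprod.inl ≫ inv (F.prodComparison A B) ≫ F.map σ = 𝟙 _ := by
  have h : biprod.map (𝟙 _) (F.map (0 : B →ₙ+* B)) ≫ inv (F.prodComparison A B) ≫ F.map σ =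
      biprod.fst := by
    rw [← cancel_epi (F.prodComparison A B), ← F.map_id, ← Category.assoc,
      ← map_prodMap_comp_prodComparison, Category.assoc, IsIso.hom_inv_id_assoc, ← F.map_comp,
      hσ, F.map_comp, hq, Category.comp_id, biprod.lift_fst]
  simpa using biprod.inl ≫= h

lemma inr_comp_inv_prodComparison_comp_map (σ : A × B →ₙ+* B) (q : B →ₙ+* B)
    (hq : F.map q = 𝟙 _)
    (hσ : σ.comp ((0 : A →ₙ+* A).prodMap (NonUnitalRingHom.id B)) =
      q.comp (NonUnitalRingHom.snd A B)) :
    biprod.inr ≫ inv (F.prodComparison A B) ≫ F.map σ = 𝟙 _ := by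
  have h : biprod.map (F.map (0 : A →ₙ+* A)) (𝟙 _) ≫ inv (F.prodComparison A B) ≫ F.map σ =
      biprod.snd := by
    rw [← cancel_epi (F.prodComparison A B), ← F.map_id, ← Category.assoc,
      ← map_prodMap_comp_prodComparison, Category.assoc, IsIso.hom_inv_id_assoc, ← F.map_comp,
      hσ, F.map_comp, hq, Category.comp_id, biprod.lift_snd]
  simpa using biprod.inr ≫= h

lemma isZero_of_comp_prod_eq [IsIso (F.prodComparison A A)] (σ : A × A →ₙ+* A)
    (hinl : biprod.inl ≫ inv (F.prodComparison A A) ≫ F.map σ = 𝟙 _)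
    (hinr : biprod.inr ≫ inv (F.prodComparison A A) ≫ F.map σ = 𝟙 _)
    (ι : A →ₙ+* A) (hι : σ.comp ((NonUnitalRingHom.id A).prod ι) = ι) : IsZero (F.obj A) := by
  have h : F.map ι = 𝟙 _ + F.map ι :=
    calc F.map ι = F.map ((NonUnitalRingHom.id A).prod ι) ≫ F.prodComparison A A ≫
          inv (F.prodComparison A A) ≫ F.map σ := by
          rw [IsIso.hom_inv_id_assoc, ← F.map_comp, hι]
      _ = biprod.lift (𝟙 _) (F.map ι) ≫ inv (F.prodComparison A A) ≫ F.map σ := by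
          rw [← Category.assoc, map_prod_comp_prodComparison, F.map_id]
      _ = (𝟙 _ ≫ biprod.inl + F.map ι ≫ biprod.inr) ≫ inv (F.prodComparison A A) ≫ F.map σ := by
          rw [← biprod.lift_eq]
      _ = 𝟙 _ + F.map ι := by
          rw [Preadditive.add_comp, Category.assoc, Category.assoc, Category.id_comp, hinl, hinr,
            Category.comp_id]
  exact (IsZero.iff_id_eq_zero _).2 (by simpa using h)

end RingFunctor

theorem sum_ring_codiagonal_and_infinite_sum_ring_vanishing
    {D : Type*} [Category D] [Preadditive D] [HasBinaryBiproducts D]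
    (F : RingFunctor D)
    (R : Type) [Ring R]
    (a0 a1 b0 b1 : R)
    (h00 : a0 * b0 = 1) (h11 : a1 * b1 = 1)
    (hsum : b0 * a0 + b1 * a1 = 1)
    -- `⊞ : R × R → R` is the (unital) ring homomorphism
    -- `(a,b) ↦ β₀aα₀ + β₁bα₁`.
    (box : R × R →+* R)
    (hbox : ∀ p : R × R, box p = b0 * p.1 * a0 + b1 * p.2 * a1)
    -- `γ = ⟨F(π₀), F(π₁)⟩` is an isomorphism
    (γ : F.obj (R × R) ⟶ F.obj R ⊞ F.obj R)
    (hγ : γ = biprod.lift (F.map (NonUnitalRingHom.fst R R))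
                          (F.map (NonUnitalRingHom.snd R R)))
    (hγiso : IsIso γ)
    (h₁ : F.M2Stable R) (h₂ : F.M2Stable (M2 R)) :
    (biprod.inl ≫ inv γ ≫ F.map box.toNonUnitalRingHom = 𝟙 (F.obj R) ∧
     biprod.inr ≫ inv γ ≫ F.map box.toNonUnitalRingHom = 𝟙 (F.obj R)) ∧
    -- if moreover `R` is an infinite sum ring, then `F(R) = 0`:
    (∀ inf : R →+* R, (∀ a : R, box (a, inf a) = inf a) →
      IsZero (F.obj R)) := by
  subst hγ
  have h₄ : F.M2Stable (M2 (M2 R)) := h₂.of_ringEquiv (sumRingEquivM2 h00 h11 hsum).mapMatrix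
  have hinl := F.inl_comp_inv_prodComparison_comp_map box.toNonUnitalRingHom _
    (F.map_conjBy_eq_id h₁ h₂ h₄ h00) (by ext ⟨x, y⟩; exact (hbox (x, 0)).trans (by simp))
  have hinr := F.inr_comp_inv_prodComparison_comp_map box.toNonUnitalRingHom _
    (F.map_conjBy_eq_id h₁ h₂ h₄ h11) (by ext ⟨x, y⟩; exact (hbox (0, y)).trans (by simp))
  refine ⟨⟨hinl, hinr⟩, fun inf hinf => ?_⟩
  exact F.isZero_of_comp_prod_eq _ hinl hinr inf.toNonUnitalRingHom
    (NonUnitalRingHom.ext fun x => hinf x)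

end
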